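/- Let (Ω, 𝒜, P) be a probability space, l : Ω → ℝ^ℓ integrable, m_L ≤ m_U bounded measurable. Then the set Θ₀ = { E[m·l] : m measurable, m_L ≤ m ≤ m_U P-a.s. } is closed in ℝ^ℓ, hence compact (being also bounded and convex). -/

import Mathlib

/-!
Write `Θ₀` as the image of the order interval `[m_L, m_U]` of `L²(μ)` under the continuous linear
map `h ↦ ∫ h • u`. A bounded closed convex subset of a Hilbert space is weakly compact (Mazur's
theorem makes it weakly closed, and the Riesz isomorphism carries it into a closed ball of the
weak-* dual, compact by Banach–Alaoglu), and a continuous linear map into a finite-dimensional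
space is weakly continuous, so the image is compact. As `l` is only integrable, first pass to the
measure `μ = (1 + ‖l‖) • P` and to `u = l / (1 + ‖l‖)`: `u` is bounded, `μ` is finite with the same
null sets as `P`, and `∫ m • u ∂μ = ∫ m • l ∂P` for every `m`.
-/

open MeasureTheory InnerProductSpace
open scoped ENNReal NNReal RealInnerProductSpace

section Hilbert

variable {E : Type*} [NormedAddCommGroup E] [InnerProductSpace ℝ E] [CompleteSpace E]

namespace InnerProductSpace

theorem continuous_apply_toDual_symm (f : StrongDual ℝ E) :
    Continuous fun φ : WeakDual ℝ E => f ((toDual ℝ E).symm (WeakDual.toStrongDual φ)) := by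
  have h (φ : WeakDual ℝ E) :
      f ((toDual ℝ E).symm (WeakDual.toStrongDual φ)) = φ ((toDual ℝ E).symm f) := by
    rw [← toDual_symm_apply, real_inner_comm, toDual_symm_apply]
    rfl
  simpa only [h] using WeakDual.eval_continuous _

theorem isCompact_image_toWeakDual_toDual {s : Set E} (hconv : Convex ℝ s) (hclosed : IsClosed s)
    (hbdd : Bornology.IsBounded s) :
    IsCompact ((fun x => StrongDual.toWeakDual (toDual ℝ E x)) '' s) := by
  obtain ⟨R, hR⟩ := hbdd.subset_closedBall 0
  let g : WeakDual ℝ E → WeakSpace ℝ E :=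
    fun φ => toWeakSpace ℝ E ((toDual ℝ E).symm (WeakDual.toStrongDual φ))
  have hg : Continuous g := WeakBilin.continuous_of_continuous_eval _ continuous_apply_toDual_symm
  have hweak : IsClosed (toWeakSpace ℝ E '' s) := by
    rw [← closure_eq_iff_isClosed, ← hconv.toWeakSpace_closure ℝ, hclosed.closure_eq]
  have himage :
      (fun x => StrongDual.toWeakDual (toDual ℝ E x)) '' s = g ⁻¹' (toWeakSpace ℝ E '' s) := by
    ext φ
    constructor
    · rintro ⟨x, hx, rfl⟩
      exact ⟨x, hx, by simp [g]⟩
    · rintro ⟨x, hx, hxφ⟩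
      refine ⟨x, hx, ?_⟩
      rw [(toWeakSpace ℝ E).injective hxφ]
      simp
  refine (WeakDual.isCompact_closedBall 0 R).of_isClosed_subset (himage ▸ hweak.preimage hg) ?_
  rintro _ ⟨x, hx, rfl⟩
  simpa using hR hx

end InnerProductSpace

theorem ContinuousLinearMap.isCompact_image_of_convex {F : Type*} [NormedAddCommGroup F]
    [NormedSpace ℝ F] [FiniteDimensional ℝ F] (A : E →L[ℝ] F) {s : Set E} (hconv : Convex ℝ s)
    (hclosed : IsClosed s) (hbdd : Bornology.IsBounded s) : IsCompact (A '' s) := by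
  let b := Module.finBasis ℝ F
  have hA : Continuous fun φ : WeakDual ℝ E => A ((toDual ℝ E).symm (WeakDual.toStrongDual φ)) := by
    let coord (i) : StrongDual ℝ E := .proj i ∘L b.equivFunL.toContinuousLinearMap ∘L A
    have h (φ : WeakDual ℝ E) : A ((toDual ℝ E).symm (WeakDual.toStrongDual φ)) =
        b.equivFunL.symm fun i => coord i ((toDual ℝ E).symm (WeakDual.toStrongDual φ)) := by
      simp [coord]
    simp_rw [h]
    exact b.equivFunL.symm.continuous.comp (continuous_pi fun i => continuous_apply_toDual_symm _)
  simpa [Set.image_image] using (isCompact_image_toWeakDual_toDual hconv hclosed hbdd).image hA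

end Hilbert

theorem isBounded_Icc_of_hasSolidNorm {α : Type*} [NormedAddCommGroup α] [Lattice α]
    [HasSolidNorm α] [IsOrderedAddMonoid α] (a b : α) : Bornology.IsBounded (Set.Icc a b) := by
  refine (Metric.isBounded_iff_subset_closedBall 0).2 ⟨‖a‖ + ‖b‖, fun x hx => ?_⟩
  rw [mem_closedBall_zero_iff]
  calc ‖x‖ ≤ ‖|a| + |b|‖ := by
        refine norm_le_norm_of_abs_le_abs ?_
        rw [abs_of_nonneg (add_nonneg (abs_nonneg a) (abs_nonneg b))]
        exact abs_le'.2 ⟨hx.2.trans ((le_abs_self b).trans (le_add_of_nonneg_left (abs_nonneg a))),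
          (neg_le_neg hx.1).trans ((neg_le_abs a).trans (le_add_of_nonneg_right (abs_nonneg b)))⟩
    _ ≤ ‖|a|‖ + ‖|b|‖ := norm_add_le _ _
    _ = ‖a‖ + ‖b‖ := by rw [norm_abs_eq_norm, norm_abs_eq_norm]

namespace MeasureTheory

variable {Ω : Type*} [MeasurableSpace Ω]

instance Lp.instPosSMulMono {μ : Measure Ω} {p : ℝ≥0∞} : PosSMulMono ℝ (Lp ℝ p μ) where
  smul_le_smul_of_nonneg_left c hc f g hfg := by
    rw [← Lp.coeFn_le] at hfg ⊢
    filter_upwards [hfg, Lp.coeFn_smul c f, Lp.coeFn_smul c g] with ω h hf hg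
    rw [hf, hg]
    exact smul_le_smul_of_nonneg_left h hc

/-- The set `Θ₀` of the statement. -/
def identifiedSet {E : Type*} [NormedAddCommGroup E] [NormedSpace ℝ E] (P : Measure Ω)
    (mL mU : Ω → ℝ) (l : Ω → E) : Set E :=
  {θ | ∃ m : Ω → ℝ, Measurable m ∧ (∀ᵐ ω ∂P, mL ω ≤ m ω ∧ m ω ≤ mU ω) ∧ θ = ∫ ω, m ω • l ω ∂P}

section L2

variable {μ : Measure Ω} {F : Type*} [NormedAddCommGroup F] [InnerProductSpace ℝ F]
  [FiniteDimensional ℝ F] {u : Ω → F}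

/-- The map `h ↦ ∫ h • u`, assembled from the coordinates `h ↦ ⟪⟪b i, u⟫, h⟫` in an orthonormal
basis `b` of `F` so that it is visibly continuous. -/
noncomputable def MemLp.integralSMulCLM (hu : MemLp u 2 μ) : Lp ℝ 2 μ →L[ℝ] F :=
  ∑ i, (innerSL ℝ ((hu.const_inner (stdOrthonormalBasis ℝ F i)).toLp _)).smulRight
    (stdOrthonormalBasis ℝ F i)

theorem MemLp.integralSMulCLM_apply (hu : MemLp u 2 μ) (h : Lp ℝ 2 μ) :
    hu.integralSMulCLM h = ∫ ω, h ω • u ω ∂μ := by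
  set b := stdOrthonormalBasis ℝ F
  have hint : Integrable (fun ω => h ω • u ω) μ :=
    memLp_one_iff_integrable.1 (hu.smul (Lp.memLp h))
  conv_rhs => rw [← b.sum_repr' (∫ ω, h ω • u ω ∂μ)]
  simp only [MemLp.integralSMulCLM, FunLike.coe_sum, Finset.sum_apply,
    ContinuousLinearMap.smulRight_apply, innerSL_apply_apply]
  refine Finset.sum_congr rfl fun i _ => congrArg (· • b i) ?_
  rw [← integral_inner hint, L2.inner_def]
  refine integral_congr_ae ?_
  filter_upwards [(hu.const_inner (𝕜 := ℝ) (b i)).coeFn_toLp] with ω hω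
  rw [hω, real_inner_smul_right, Real.inner_apply, mul_comm]

theorem identifiedSet_eq_image {mL mU : Ω → ℝ} (hmL : MemLp mL 2 μ) (hmU : MemLp mU 2 μ)
    (hu : MemLp u 2 μ) :
    identifiedSet μ mL mU u = hu.integralSMulCLM '' Set.Icc (hmL.toLp mL) (hmU.toLp mU) := by
  ext θ
  simp only [identifiedSet, Set.mem_image, Set.mem_Icc, ← Lp.coeFn_le]
  constructor
  · rintro ⟨m, hm, hbounds, rfl⟩
    have hmem : MemLp m 2 μ := by
      refine (hmL.norm.add hmU.norm).mono hm.aestronglyMeasurable ?_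
      filter_upwards [hbounds] with ω hω
      calc ‖m ω‖ ≤ ‖mL ω‖ + ‖mU ω‖ := by
            simp only [Real.norm_eq_abs]
            exact abs_le.2 ⟨by linarith [neg_abs_le (mL ω), abs_nonneg (mU ω)],
              by linarith [le_abs_self (mU ω), abs_nonneg (mL ω)]⟩
        _ ≤ _ := Real.le_norm_self _
    refine ⟨hmem.toLp m, ⟨?_, ?_⟩, ?_⟩
    · filter_upwards [hbounds, hmL.coeFn_toLp, hmem.coeFn_toLp] with ω hω h1 h2
      rw [h1, h2]; exact hω.1
    · filter_upwards [hbounds, hmU.coeFn_toLp, hmem.coeFn_toLp] with ω hω h1 h2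
      rw [h1, h2]; exact hω.2
    · rw [hu.integralSMulCLM_apply]
      refine integral_congr_ae ?_
      filter_upwards [hmem.coeFn_toLp] with ω hω
      rw [hω]
  · rintro ⟨h, ⟨hlow, hupp⟩, rfl⟩
    have hh := Lp.aestronglyMeasurable h
    refine ⟨hh.mk h, hh.stronglyMeasurable_mk.measurable, ?_, ?_⟩
    · filter_upwards [hlow, hupp, hmL.coeFn_toLp, hmU.coeFn_toLp, hh.ae_eq_mk] with ω h1 h2 h3 h4 h5
      rw [← h3, ← h4, ← h5]
      exact ⟨h1, h2⟩
    · rw [hu.integralSMulCLM_apply]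
      refine integral_congr_ae ?_
      filter_upwards [hh.ae_eq_mk] with ω hω
      rw [hω]

theorem isCompact_identifiedSet {mL mU : Ω → ℝ} (hmL : MemLp mL 2 μ) (hmU : MemLp mU 2 μ)
    (hu : MemLp u 2 μ) : IsCompact (identifiedSet μ mL mU u) := by
  rw [identifiedSet_eq_image hmL hmU hu]
  exact hu.integralSMulCLM.isCompact_image_of_convex (convex_Icc _ _) isClosed_Icc
    (isBounded_Icc_of_hasSolidNorm _ _)

end L2

theorem identifiedSet_congr {E : Type*} [NormedAddCommGroup E] [NormedSpace ℝ E]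
    {P μ : Measure Ω} (hae : ae μ = ae P) {l u : Ω → E}
    (hint : ∀ m : Ω → ℝ, ∫ ω, m ω • u ω ∂μ = ∫ ω, m ω • l ω ∂P) (mL mU : Ω → ℝ) :
    identifiedSet μ mL mU u = identifiedSet P mL mU l := by
  simp only [identifiedSet, Filter.Eventually, hae, hint]

theorem Integrable.exists_reweighting_memLp_top {E : Type*} [NormedAddCommGroup E] [NormedSpace ℝ E]
    {P : Measure Ω} [IsFiniteMeasure P] {l : Ω → E} (hl : Integrable l P) :
    ∃ (μ : Measure Ω) (u : Ω → E), IsFiniteMeasure μ ∧ ae μ = ae P ∧ MemLp u ∞ μ ∧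
      ∀ m : Ω → ℝ, ∫ ω, m ω • u ω ∂μ = ∫ ω, m ω • l ω ∂P := by
  obtain ⟨g, hg, hlg⟩ := hl.aestronglyMeasurable
  set w : Ω → ℝ≥0 := fun ω => 1 + ‖g ω‖₊
  have hw : Measurable w := measurable_const.add hg.nnnorm.measurable
  have hw_pos (ω : Ω) : (0 : ℝ) < w ω := by positivity
  refine ⟨P.withDensity (fun ω => w ω), fun ω => (w ω : ℝ)⁻¹ • g ω, ?_, ?_, ?_, fun m => ?_⟩
  · refine isFiniteMeasure_withDensity (hasFiniteIntegral_iff_ofNNReal.1 ?_).ne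
    exact ((integrable_const 1).add (hl.congr hlg).norm).2
  · exact le_antisymm (withDensity_absolutelyContinuous _ _).ae_le
      (withDensity_absolutelyContinuous' hw.coe_nnreal_ennreal.aemeasurable
        (ae_of_all _ fun ω => by simp [w])).ae_le
  · refine memLp_top_of_bound ((hw.coe_nnreal_real.inv.aestronglyMeasurable).smul
      hg.aestronglyMeasurable) 1 (ae_of_all _ fun ω => ?_)
    rw [norm_smul, norm_inv, Real.norm_of_nonneg (hw_pos ω).le, inv_mul_le_one₀ (hw_pos ω)]
    simp [w]
  · rw [integral_withDensity_eq_integral_smul hw]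
    refine integral_congr_ae ?_
    filter_upwards [hlg] with ω hω
    rw [NNReal.smul_def, smul_comm, smul_inv_smul₀ (hw_pos ω).ne', hω]

end MeasureTheory

theorem stmt5 {Ω : Type*} [MeasurableSpace Ω] (P : Measure Ω) [IsProbabilityMeasure P]
    {ℓ : ℕ} (l : Ω → EuclideanSpace ℝ (Fin ℓ)) (hl : Integrable l P)
    (mL mU : Ω → ℝ) (hmL : Measurable mL) (hmU : Measurable mU)
    (hbdd : ∃ C : ℝ, ∀ ω, |mL ω| ≤ C ∧ |mU ω| ≤ C) :
    IsClosed {θ : EuclideanSpace ℝ (Fin ℓ) |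
      ∃ m : Ω → ℝ, Measurable m ∧ (∀ᵐ ω ∂P, mL ω ≤ m ω ∧ m ω ≤ mU ω) ∧
        θ = ∫ ω, m ω • l ω ∂P} ∧
    IsCompact {θ : EuclideanSpace ℝ (Fin ℓ) |
      ∃ m : Ω → ℝ, Measurable m ∧ (∀ᵐ ω ∂P, mL ω ≤ m ω ∧ m ω ≤ mU ω) ∧
        θ = ∫ ω, m ω • l ω ∂P} := by
  obtain ⟨C, hC⟩ := hbdd
  obtain ⟨μ, u, hμ, hae, hu, hint⟩ := hl.exists_reweighting_memLp_top
  have hmemLp {m : Ω → ℝ} (hm : Measurable m) (hmC : ∀ ω, |m ω| ≤ C) : MemLp m 2 μ :=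
    (memLp_top_of_bound hm.aestronglyMeasurable C (ae_of_all _ hmC)).mono_exponent le_top
  have hcpt : IsCompact (identifiedSet P mL mU l) := by
    rw [← identifiedSet_congr hae hint]
    exact isCompact_identifiedSet (hmemLp hmL fun ω => (hC ω).1) (hmemLp hmU fun ω => (hC ω).2)
      (hu.mono_exponent le_top)
  exact ⟨hcpt.isClosed, hcpt⟩
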